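/- Let f and P_1 be realized by a dominant-strategy, individually rational, no-negative-transfers mechanism over unit-demand valuations, with k = max{m,n}. Suppose that on profile (v_1^{e1,one}, v_2^{e2,one}, ..., v_n^{en,one}) bidder 1 wins a bundle containing e_1 and pays at most 1. Then on the profile where bidder 1 has the unit-demand valuation v_1^{both} (value 2k²+2 for e_1, 2k² for e_2, 0 for other items) and the others retain their v_i^{ei,one} valuations, bidder 1 wins a bundle containing e_1 and pays at most 1. -/

import Mathlib

/-- The unit-demand valuation with per-item values `v`: `val(S) = max_{j ∈ S} v j`. -/
noncomputable def udVal {m : ℕ} (v : Fin m → NNReal) (X : Finset (Fin m)) : ℝ :=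
  ((X.sup v : NNReal) : ℝ)

/-- The item desired by bidder `i`: item `e_i` for `i ≤ m`, and item `e_m` for `i > m`. -/
def eIdx {n : ℕ} (m : ℕ) (hm : 0 < m) (i : Fin n) : Fin m :=
  ⟨min i (m - 1), by omega⟩

/-- The unit-demand valuation with value `1` for item `e` and `0` elsewhere. -/
noncomputable def oneVal {m : ℕ} (e : Fin m) : Fin m → NNReal :=
  fun x => if x = e then 1 else 0

/-- Lemma 6, part 4: Let `(f, P₁)` be realized by a dominant-strategy,
individually rational, no-negative-transfers mechanism over unit-demand valuations with
`k = max {m, n}`. Suppose that on the profile `(v_1^{e1,one}, …, v_n^{en,one})` bidder `1`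
wins a bundle containing `e_1` and pays at most `1`. Then on the profile where bidder `1`
has the unit-demand valuation `v_1^{both}` (value `2k²+2` for `e_1`, `2k²` for `e_2`, `0`
elsewhere) and the others keep their `v_i^{ei,one}` valuations, bidder `1` wins a bundle
containing `e_1` and pays at most `1`. -/
theorem unitdemand_both_wins_e1
    (m n : ℕ) (hm : 2 ≤ m) (hn : 2 ≤ n)
    (f : (Fin n → Fin m → NNReal) → Fin n → Finset (Fin m))
    (P1 : (Fin n → Fin m → NNReal) → ℝ)
    (k : ℕ) (hk : k = max m n)
    (i0 : Fin n) (hi0 : i0 = ⟨0, by omega⟩)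
    (e0 : Fin m) (he0 : e0 = ⟨0, by omega⟩) (e1 : Fin m) (he1 : e1 = ⟨1, by omega⟩)
    -- dominant-strategy incentive compatibility for bidder 1
    (hDSIC : ∀ (v : Fin n → Fin m → NNReal) (d' : Fin m → NNReal),
      udVal (v i0) (f v i0) - P1 v ≥
        udVal (v i0) (f (Function.update v i0 d') i0) - P1 (Function.update v i0 d'))
    -- individual rationality for bidder 1
    (hIR : ∀ v : Fin n → Fin m → NNReal, 0 ≤ udVal (v i0) (f v i0) - P1 v)
    -- no-negative-transfers for bidder 1
    (hNNT : ∀ v : Fin n → Fin m → NNReal, 0 ≤ P1 v)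
    (vONE : Fin n → Fin m → NNReal)
    (hvONE : vONE = fun j => oneVal (eIdx m (by omega) j))
    (hwin : e0 ∈ f vONE i0) (hpay : P1 vONE ≤ 1)
    (vboth : Fin m → NNReal)
    (hvboth : vboth = fun x => if x = e0 then 2 * (k : NNReal) ^ 2 + 2
      else if x = e1 then 2 * (k : NNReal) ^ 2 else 0)
    (vB : Fin n → Fin m → NNReal) (hvB : vB = Function.update vONE i0 vboth) :
    e0 ∈ f vB i0 ∧ P1 vB ≤ 1 := by

  have hC : ∀ X : Finset (Fin m), X.sup vboth ≤ 2 * (k : NNReal) ^ 2 + 2 := by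
    intro X
    refine Finset.sup_le fun x _ => ?_
    rw [hvboth]
    dsimp only
    split_ifs
    all_goals first | exact le_rfl | exact le_add_of_nonneg_right zero_le | exact zero_le
  have hnot : ∀ X : Finset (Fin m), e0 ∉ X → X.sup vboth ≤ 2 * (k : NNReal) ^ 2 := by
    intro X hX
    refine Finset.sup_le fun x hx => ?_
    have hxe : x ≠ e0 := fun h => hX (h ▸ hx)
    rw [hvboth]
    dsimp only
    rw [if_neg hxe]
    split_ifs
    · exact le_rfl
    · exact zero_le
  have hvb0 : vboth e0 = 2 * (k : NNReal) ^ 2 + 2 := by rw [hvboth]; simp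
  have hupd : Function.update vB i0 (oneVal e0) = vONE := by
    have h1 : vONE i0 = oneVal e0 := by
      rw [hvONE, hi0, he0]
      simp [eIdx]
    rw [hvB, Function.update_idem, ← h1, Function.update_eq_self]
  have hvBi0 : vB i0 = vboth := by rw [hvB]; simp
  have hDS := hDSIC vB (oneVal e0)
  rw [hupd, hvBi0] at hDS
  have hlow : ((2 * (k : NNReal) ^ 2 + 2 : NNReal) : ℝ) ≤ udVal vboth (f vONE i0) := by
    unfold udVal
    exact_mod_cast hvb0 ▸ Finset.le_sup (f := vboth) hwin
  have key : ((2 * (k : NNReal) ^ 2 : NNReal) : ℝ) + 1 ≤ udVal vboth (f vB i0) - P1 vB := by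
    have : ((2 * (k : NNReal) ^ 2 + 2 : NNReal) : ℝ) - 1 ≤ udVal vboth (f vONE i0) - P1 vONE := by
      linarith
    calc ((2 * (k : NNReal) ^ 2 : NNReal) : ℝ) + 1
        = ((2 * (k : NNReal) ^ 2 + 2 : NNReal) : ℝ) - 1 := by push_cast; ring
      _ ≤ udVal vboth (f vONE i0) - P1 vONE := this
      _ ≤ udVal vboth (f vB i0) - P1 vB := hDS
  have hmem : e0 ∈ f vB i0 := by
    by_contra h
    have hub : udVal vboth (f vB i0) ≤ ((2 * (k : NNReal) ^ 2 : NNReal) : ℝ) := by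
      exact_mod_cast NNReal.coe_le_coe.mpr (hnot _ h)
    have := hNNT vB
    linarith
  refine ⟨hmem, ?_⟩
  have hub : udVal vboth (f vB i0) ≤ ((2 * (k : NNReal) ^ 2 + 2 : NNReal) : ℝ) :=
    NNReal.coe_le_coe.mpr (hC _)
  have : ((2 * (k : NNReal) ^ 2 + 2 : NNReal) : ℝ) = ((2 * (k : NNReal) ^ 2 : NNReal) : ℝ) + 2 := by
    push_cast; ring
  linarith
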